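/- Let R be a noetherian regular ring of prime characteristic p, M an (f1,f2)-torsion F-finite F-module with root L ⊆ M (so M = ∪_e L_e with L_e = F^e(L)). If (f1M ∩ L :_L f2) = f1M ∩ L, then (f1M ∩ L_e :_{L_e} f2) = f1M ∩ L_e for every e ≥ 1. Hence Supp((f1M :_M f2)/f1M) = Supp((f1M ∩ L :_L f2)/(f1M ∩ L)), which is Zariski-closed. -/

import Mathlib

open CategoryTheory IsLocalRing

open scoped Pointwise

open scoped ChangeOfRings

/-- A noetherian local ring is regular if its Krull dimension equals the dimension of its
cotangent space over the residue field. -/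
def IsRegularLocalRingStmt (A : Type u) [CommRing A] [IsLocalRing A] : Prop :=
  ringKrullDim A = (Module.finrank (ResidueField A) (CotangentSpace A) : WithBot (WithTop ℕ))

/-- A commutative ring is regular if it is noetherian and all of its localizations at
primes are regular local rings. -/
def IsRegularRingStmt (R : Type u) [CommRing R] : Prop :=
  IsNoetherianRing R ∧
    ∀ (P : Ideal R) [P.IsPrime], IsRegularLocalRingStmt (Localization.AtPrime P)

/-- The image `F(N) ⊆ M` of a submodule `N ⊆ M` under the Peskine–Szpiro functor,
using the `F`-module structure isomorphism `θ : M ≅ F(M)`. -/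
noncomputable def FsubStmt {R : Type} [CommRing R] (p : ℕ) [Fact p.Prime] [CharP R p]
    (M : ModuleCat R) (θ : M ≅ (ModuleCat.extendScalars (frobenius R p)).obj M)
    (N : Submodule R M) : Submodule R M :=
  LinearMap.range
    ((ModuleCat.extendScalars (frobenius R p)).map (ModuleCat.ofHom N.subtype) ≫ θ.inv).hom

/-- The submodules `L_e = F^e(L) ⊆ M` generated from a root `L` of an `F`-module `M`. -/
noncomputable def rootIterStmt {R : Type} [CommRing R] (p : ℕ) [Fact p.Prime] [CharP R p]
    (M : ModuleCat R) (θ : M ≅ (ModuleCat.extendScalars (frobenius R p)).obj M)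
    (L : Submodule R M) : ℕ → Submodule R M
  | 0 => L
  | e + 1 => FsubStmt p M θ (rootIterStmt p M θ L e)

section Helpers

universe v

variable {R : Type} [CommRing R] {M : Type v} [AddCommGroup M] [Module R M]

lemma mem_pt_smul_top_iff (f1 : R) (x : M) :
    x ∈ f1 • (⊤ : Submodule R M) ↔ ∃ m, f1 • m = x := by
  constructor
  · intro h
    change x ∈ Submodule.map _ ⊤ at h
    rw [Submodule.mem_map] at h
    obtain ⟨m, -, hm⟩ := h
    exact ⟨m, hm⟩
  · rintro ⟨m, rfl⟩
    exact Submodule.smul_mem_pointwise_smul m f1 ⊤ trivial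

lemma pow_smul_mem_pt (f1 : R) (k : ℕ) (hk : k ≠ 0) (v : M) :
    f1 ^ k • v ∈ f1 • (⊤ : Submodule R M) := by
  obtain ⟨q, rfl⟩ : ∃ q, k = q + 1 :=
    ⟨k - 1, (Nat.succ_pred_eq_of_pos (Nat.pos_of_ne_zero hk)).symm⟩
  rw [pow_succ, mul_comm, mul_smul]
  exact Submodule.smul_mem_pointwise_smul _ f1 ⊤ trivial

lemma supp_char (N₁ N₂ : Submodule R M) (P : PrimeSpectrum R) :
    P ∈ Module.support R (↥N₂ ⧸ Submodule.comap N₂.subtype N₁) ↔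
      ∃ x, x ∈ N₂ ∧ ∀ r : R, r • x ∈ N₁ → r ∈ P.asIdeal := by
  rw [Module.mem_support_iff']
  constructor
  · rintro ⟨m, hm⟩
    obtain ⟨x, rfl⟩ := Submodule.Quotient.mk_surjective _ m
    refine ⟨x, x.2, fun r hr => ?_⟩
    by_contra hrP
    refine hm r hrP ?_
    rw [← Submodule.Quotient.mk_smul, Submodule.Quotient.mk_eq_zero]
    exact hr
  · rintro ⟨x, hx2, hx⟩
    refine ⟨Submodule.Quotient.mk ⟨x, hx2⟩, fun r hrP hr0 => hrP ?_⟩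
    rw [← Submodule.Quotient.mk_smul, Submodule.Quotient.mk_eq_zero] at hr0
    exact hx r hr0

end Helpers

universe v₂

lemma tmul_shift {R : Type} {S : Type} [CommRing R] [CommRing S] (f : R →+* S)
    (M : ModuleCat.{v₂} R) (a : R) (b : S) (h : f a = b) (r : S) (m : M) :
    ((b * r) ⊗ₜ[R,f] m : (ModuleCat.extendScalars f).obj M) = r ⊗ₜ[R,f] (a • m) := by
  subst h
  letI : Module R S := Module.compHom S f
  haveI : IsScalarTower R R S := ⟨fun x y z => mul_smul x y z⟩
  rw [← TensorProduct.smul_tmul]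
  rfl

lemma frob_step {R : Type} [CommRing R] (p : ℕ) [Fact p.Prime] [CharP R p]
    (M : ModuleCat R) (θ : M ≅ (ModuleCat.extendScalars (frobenius R p)).obj M)
    (f1 s : R) (N : Submodule R M)
    (hN : ∀ x ∈ N, s • x ∈ f1 • (⊤ : Submodule R M)) :
    ∀ y ∈ FsubStmt p M θ N, s ^ p • y ∈ f1 • (⊤ : Submodule R M) := by
  intro y hy
  simp only [FsubStmt, LinearMap.mem_range] at hy
  obtain ⟨z, rfl⟩ := hy
  have key : ∀ z : (ModuleCat.extendScalars (frobenius R p)).obj (ModuleCat.of R ↥N),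
      ∃ w : (ModuleCat.extendScalars (frobenius R p)).obj M,
        s ^ p • ((ModuleCat.extendScalars (frobenius R p)).map (ModuleCat.ofHom N.subtype)) z
          = f1 ^ p • w := by
    intro z
    induction z using TensorProduct.induction_on with
    | zero => exact ⟨0, by erw [map_zero]; rw [smul_zero, smul_zero]⟩
    | add z₁ z₂ h₁ h₂ =>
      obtain ⟨w₁, hw₁⟩ := h₁
      obtain ⟨w₂, hw₂⟩ := h₂
      exact ⟨w₁ + w₂, by erw [map_add]; rw [smul_add, hw₁, hw₂, smul_add]⟩
    | tmul r n =>
      have hsn := hN n.1 n.2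
      rw [mem_pt_smul_top_iff] at hsn
      obtain ⟨m', hm'⟩ := hsn
      refine ⟨(r ⊗ₜ[R] m' : TensorProduct R ((ModuleCat.restrictScalars (frobenius R p)).obj (ModuleCat.of R R)) M), ?_⟩
      erw [ModuleCat.ExtendScalars.map_tmul, ModuleCat.ExtendScalars.smul_tmul,
        ModuleCat.ExtendScalars.smul_tmul]
      erw [tmul_shift (frobenius R p) M s (s ^ p) (frobenius_def p s) r n.1]
      rw [← hm']
      rw [← tmul_shift (frobenius R p) M f1 (f1 ^ p) (frobenius_def p f1) r m']
      rfl
  obtain ⟨w, hw⟩ := key z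
  have heq : s ^ p • ((ModuleCat.extendScalars (frobenius R p)).map
        (ModuleCat.ofHom N.subtype) ≫ θ.inv) z
      = f1 ^ p • θ.inv w := by
    rw [ConcreteCategory.comp_apply, ← map_smul, hw, map_smul]
  rw [heq]
  exact pow_smul_mem_pt f1 p (Fact.out : p.Prime).pos.ne' (θ.inv w)

/-- Let `M` be an `(f1,f2)`-torsion `F`-finite `F`-module over a noetherian regular ring of
prime characteristic `p`, with finitely generated root `L` (so `M = ∪ₑ L_e` with
`L_e = F^e(L)`). If `(f1 M ∩ L :_L f2) = f1 M ∩ L`, then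
`(f1 M ∩ L_e :_{L_e} f2) = f1 M ∩ L_e` for all `e`. Hence
`Supp ((f1 M :_M f2)/f1 M) = Supp ((f1 M ∩ L :_L f2)/(f1 M ∩ L))`, which is Zariski-closed. -/
theorem stmt_8 {R : Type} [CommRing R] (p : ℕ) [Fact p.Prime] [CharP R p]
    (hreg : IsRegularRingStmt R) (f1 f2 : R)
    (M : ModuleCat R) (θ : M ≅ (ModuleCat.extendScalars (frobenius R p)).obj M)
    (htor : ∀ z : M, ∃ n : ℕ, f1 ^ n • z = 0 ∧ f2 ^ n • z = 0)
    (L : Submodule R M) (hfg : L.FG)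
    (hmono : ∀ e, rootIterStmt p M θ L e ≤ rootIterStmt p M θ L (e + 1))
    (hgen : (⨆ e, rootIterStmt p M θ L e) = ⊤) :
    ((L ⊓ Submodule.comap ((LinearMap.lsmul R M) f2) (f1 • (⊤ : Submodule R M) ⊓ L) =
        f1 • (⊤ : Submodule R M) ⊓ L) →
      ∀ e : ℕ, 1 ≤ e →
        rootIterStmt p M θ L e ⊓ Submodule.comap ((LinearMap.lsmul R M) f2)
            (f1 • (⊤ : Submodule R M) ⊓ rootIterStmt p M θ L e) =
          f1 • (⊤ : Submodule R M) ⊓ rootIterStmt p M θ L e) ∧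
    Module.support R
        (↥(Submodule.comap ((LinearMap.lsmul R M) f2) (f1 • (⊤ : Submodule R M))) ⧸
          Submodule.comap
            (Submodule.comap ((LinearMap.lsmul R M) f2) (f1 • (⊤ : Submodule R M))).subtype
            (f1 • (⊤ : Submodule R M))) =
      Module.support R
        (↥(L ⊓ Submodule.comap ((LinearMap.lsmul R M) f2)
            (f1 • (⊤ : Submodule R M) ⊓ L)) ⧸
          Submodule.comap
            (L ⊓ Submodule.comap ((LinearMap.lsmul R M) f2)
              (f1 • (⊤ : Submodule R M) ⊓ L)).subtype
            (f1 • (⊤ : Submodule R M) ⊓ L)) ∧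
    IsClosed (Module.support R
      (↥(Submodule.comap ((LinearMap.lsmul R M) f2) (f1 • (⊤ : Submodule R M))) ⧸
        Submodule.comap
          (Submodule.comap ((LinearMap.lsmul R M) f2) (f1 • (⊤ : Submodule R M))).subtype
          (f1 • (⊤ : Submodule R M)))) := by
  classical
  obtain ⟨hNoeth, -⟩ := hreg
  have hmemc : ∀ (N : Submodule R ↑M) (y : ↑M), f2 • y ∈ N →
      y ∈ Submodule.comap ((LinearMap.lsmul R M) f2) N := fun N y hy =>
    Submodule.mem_comap.mpr (by simpa only [LinearMap.lsmul_apply] using hy)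
  have hmemc' : ∀ (N : Submodule R ↑M) (y : ↑M),
      y ∈ Submodule.comap ((LinearMap.lsmul R M) f2) N → f2 • y ∈ N := fun N y hy => by
    simpa only [LinearMap.lsmul_apply] using Submodule.mem_comap.mp hy
  haveI : IsNoetherianRing R := hNoeth
  -- conjunct 2 first
  have hsupp : Module.support R
        (↥(Submodule.comap ((LinearMap.lsmul R M) f2) (f1 • (⊤ : Submodule R M))) ⧸
          Submodule.comap
            (Submodule.comap ((LinearMap.lsmul R M) f2) (f1 • (⊤ : Submodule R M))).subtype
            (f1 • (⊤ : Submodule R M))) =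
      Module.support R
        (↥(L ⊓ Submodule.comap ((LinearMap.lsmul R M) f2)
            (f1 • (⊤ : Submodule R M) ⊓ L)) ⧸
          Submodule.comap
            (L ⊓ Submodule.comap ((LinearMap.lsmul R M) f2)
              (f1 • (⊤ : Submodule R M) ⊓ L)).subtype
            (f1 • (⊤ : Submodule R M) ⊓ L)) := by
    ext P
    rw [supp_char, supp_char]
    constructor
    · rintro ⟨x, hxc, hx⟩
      rw [Submodule.mem_comap, LinearMap.lsmul_apply] at hxc
      by_cases hcase : ∃ l, l ∈ L ∧
          ∀ r : R, r • l ∈ f1 • (⊤ : Submodule R M) → r ∈ P.asIdeal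
      · obtain ⟨l, hlL, hl⟩ := hcase
        obtain ⟨n, -, hn⟩ := htor l
        have colonize : ∀ (k : ℕ) (y : ↑M), f2 ^ k • y ∈ f1 • (⊤ : Submodule R M) →
            (∀ r : R, r • y ∈ f1 • (⊤ : Submodule R M) → r ∈ P.asIdeal) →
            ∃ c : R, f2 • (c • y) ∈ f1 • (⊤ : Submodule R M) ∧
              ∀ r : R, r • (c • y) ∈ f1 • (⊤ : Submodule R M) → r ∈ P.asIdeal := by
          intro k
          induction k with
          | zero =>
            intro y h0 hy
            exfalso
            rw [pow_zero] at h0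
            exact P.2.ne_top (Ideal.eq_top_of_isUnit_mem _ (hy 1 h0) isUnit_one)
          | succ k ih =>
            intro y h0 hy
            by_cases hall : ∀ r : R, r • (f2 • y) ∈ f1 • (⊤ : Submodule R M) → r ∈ P.asIdeal
            · obtain ⟨c, hc1, hc2⟩ := ih (f2 • y)
                (by rw [smul_smul, ← pow_succ]; exact h0) hall
              refine ⟨c * f2, ?_, ?_⟩
              · rw [mul_smul]; exact hc1
              · intro r hr
                rw [mul_smul] at hr
                exact hc2 r hr
            · push_neg at hall
              obtain ⟨s₀, hs1, hs2⟩ := hall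
              refine ⟨s₀, ?_, ?_⟩
              · rw [smul_comm]; exact hs1
              · intro r hr
                rw [smul_smul] at hr
                exact (P.2.mem_or_mem (hy (r * s₀) hr)).resolve_right hs2
        obtain ⟨c, hc1, hc2⟩ := colonize n l (by rw [hn]; exact zero_mem _) hl
        refine ⟨c • l, Submodule.mem_inf.mpr ⟨L.smul_mem c hlL, ?_⟩, ?_⟩
        · exact hmemc _ _ (Submodule.mem_inf.mpr ⟨hc1, L.smul_mem f2 (L.smul_mem c hlL)⟩)
        · intro r hr
          exact hc2 r (Submodule.mem_inf.mp hr).1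
      · exfalso
        push_neg at hcase
        obtain ⟨T, hT⟩ := hfg
        have hfinset : ∀ T' : Finset ↑M, (∀ t ∈ T', (t : ↑M) ∈ L) →
            ∃ s : R, s ∉ P.asIdeal ∧ ∀ t ∈ T', s • t ∈ f1 • (⊤ : Submodule R M) := by
          intro T'
          induction T' using Finset.induction_on with
          | empty =>
            exact fun _ => ⟨1,
              fun h1 => P.2.ne_top (Ideal.eq_top_of_isUnit_mem _ h1 isUnit_one),
              fun t ht => absurd ht (Finset.notMem_empty t)⟩
          | @insert a T' ha ih =>
            intro hmem
            obtain ⟨s₁, hs₁P, hs₁⟩ := ih fun t ht => hmem t (Finset.mem_insert_of_mem ht)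
            obtain ⟨s₂, hs₂f, hs₂P⟩ := hcase a (hmem a (Finset.mem_insert_self a _))
            refine ⟨s₂ * s₁, fun hmul => ?_, ?_⟩
            · rcases P.2.mem_or_mem hmul with h | h
              exacts [hs₂P h, hs₁P h]
            · intro t ht
              rcases Finset.mem_insert.mp ht with rfl | ht'
              · rw [mul_comm, mul_smul]
                exact Submodule.smul_mem _ s₁ hs₂f
              · rw [mul_smul]
                exact Submodule.smul_mem _ s₂ (hs₁ t ht')
        obtain ⟨s, hsP, hsT⟩ := hfinset T fun t ht => by
          rw [← hT]; exact Submodule.subset_span ht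
        have hsL : ∀ x ∈ L, s • x ∈ f1 • (⊤ : Submodule R M) := by
          intro x hx
          rw [← hT] at hx
          induction hx using Submodule.span_induction with
          | mem y hy => exact hsT y hy
          | zero => rw [smul_zero]; exact zero_mem _
          | add y z hy hz ihy ihz => rw [smul_add]; exact add_mem ihy ihz
          | smul c y hy ihy => rw [smul_comm]; exact Submodule.smul_mem _ c ihy
        have hprop : ∀ e : ℕ, ∃ t : R, t ∉ P.asIdeal ∧
            ∀ x ∈ rootIterStmt p M θ L e, t • x ∈ f1 • (⊤ : Submodule R M) := by
          intro e
          induction e with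
          | zero => exact ⟨s, hsP, hsL⟩
          | succ e ih =>
            obtain ⟨t, htP, ht⟩ := ih
            refine ⟨t ^ p, fun hmem => htP (P.2.mem_of_pow_mem p hmem), ?_⟩
            intro y hy
            exact frob_step p M θ f1 t _ ht y hy
        have hx_top : x ∈ ⨆ e, rootIterStmt p M θ L e := by rw [hgen]; trivial
        obtain ⟨e, hxe⟩ := (Submodule.mem_iSup_of_chain
          ⟨fun e => rootIterStmt p M θ L e, monotone_nat_of_le_succ hmono⟩ x).mp hx_top
        obtain ⟨t, htP, ht⟩ := hprop e
        exact htP (hx t (ht x hxe))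
    · rintro ⟨x, hxm, hx⟩
      obtain ⟨hxL, hxc⟩ := Submodule.mem_inf.mp hxm
      refine ⟨x, ?_, ?_⟩
      · exact hmemc _ _ (Submodule.mem_inf.mp (hmemc' _ _ hxc)).1
      · intro r hr
        exact hx r (Submodule.mem_inf.mpr ⟨hr, L.smul_mem r hxL⟩)
  refine ⟨?_, hsupp, ?_⟩
  · -- conjunct 1
    intro h e _
    have hL : L ≤ f1 • (⊤ : Submodule R M) := by
      intro x hx
      obtain ⟨n, -, hn⟩ := htor x
      have aux : ∀ (k : ℕ) (y : ↑M), y ∈ L → f2 ^ k • y = 0 →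
          y ∈ f1 • (⊤ : Submodule R M) := by
        intro k
        induction k with
        | zero =>
          intro y hy h0
          rw [pow_zero, one_smul] at h0
          rw [h0]
          exact zero_mem _
        | succ k ih =>
          intro y hy h0
          have h1 : f2 • y ∈ f1 • (⊤ : Submodule R M) :=
            ih (f2 • y) (L.smul_mem f2 hy) (by rw [smul_smul, ← pow_succ]; exact h0)
          have h2 : y ∈ L ⊓ Submodule.comap ((LinearMap.lsmul R M) f2)
              (f1 • (⊤ : Submodule R M) ⊓ L) :=
            Submodule.mem_inf.mpr ⟨hy, hmemc _ _ (Submodule.mem_inf.mpr ⟨h1, L.smul_mem f2 hy⟩)⟩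
          rw [h] at h2
          exact (Submodule.mem_inf.mp h2).1
      exact aux n x hx hn
    have hLe : ∀ e, rootIterStmt p M θ L e ≤ f1 • (⊤ : Submodule R M) := by
      intro e
      induction e with
      | zero => exact hL
      | succ e ih =>
        intro y hy
        have := frob_step p M θ f1 1 (rootIterStmt p M θ L e)
          (fun x hx => by simpa using ih hx) y hy
        simpa using this
    apply le_antisymm
    · intro x hx
      have hx1 := (Submodule.mem_inf.mp hx).1
      exact Submodule.mem_inf.mpr ⟨hLe e hx1, hx1⟩
    · intro x hx
      obtain ⟨hx1, hx2⟩ := Submodule.mem_inf.mp hx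
      exact Submodule.mem_inf.mpr ⟨hx2, hmemc _ _ (Submodule.mem_inf.mpr
        ⟨Submodule.smul_mem _ f2 hx1, Submodule.smul_mem _ f2 hx2⟩)⟩
  · -- conjunct 3
    rw [hsupp]
    haveI hLnoe : IsNoetherian R ↥L := isNoetherian_of_fg_of_noetherian L hfg
    set N₂ := L ⊓ Submodule.comap ((LinearMap.lsmul R M) f2)
      (f1 • (⊤ : Submodule R M) ⊓ L) with hN₂
    have hle : N₂ ≤ L := inf_le_left
    have hfgN₂ : N₂.FG := by
      have h1 : (N₂.comap L.subtype).FG := IsNoetherian.noetherian _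
      have h2 : Submodule.map L.subtype (N₂.comap L.subtype) = N₂ := by
        rw [Submodule.map_comap_subtype, inf_eq_right.mpr hle]
      rw [← h2]
      exact h1.map _
    haveI : Module.Finite R ↥N₂ := Module.Finite.iff_fg.mpr hfgN₂
    rw [Module.support_eq_zeroLocus]
    exact PrimeSpectrum.isClosed_zeroLocus _
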